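/- arXiv:2409.14895 — 7 statements merged into one kernel-verified Lean document; each statement's English description precedes it below -/
import Mathlib

section
/- Let m ≥ 1 and, for i ∈ I = {1,…,m}, let f_i : ℝⁿ → ℝ and a_i ≥ 0 be such that x ↦ f_i(x) + a_i‖x‖² is convex on ℝⁿ. Let A = {x ∈ ℝⁿ : f_i(x) ≤ 0 for all i ∈ I} and, for x ∈ ℝⁿ, let I(x) = {i ∈ I : f_i(x) > 0}. Let k ∈ ℕ and let x_0,…,x_k ∈ ℝⁿ be such that for every ℓ ∈ {0,…,k} and every i ∈ I(x_ℓ) there is b_i^ℓ ∈ ℝⁿ with f_i(y) + a_i‖y‖² ≥ f_i(x_ℓ) + a_i‖x_ℓ‖² + ⟨b_i^ℓ, y − x_ℓ⟩ for all y ∈ ℝⁿ. Define the quadratic cut L_i^ℓ(x) = −a_i‖x‖² + ⟨b_i^ℓ, x⟩ + a_i‖x_ℓ‖² − ⟨b_i^ℓ, x_ℓ⟩ + f_i(x_ℓ) and the outer approximation set O_k = {x ∈ ℝⁿ : L_i^ℓ(x) ≤ 0 for all ℓ ∈ {0,…,k} and i ∈ I(x_ℓ)}. Then: (i) for every ℓ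 ∈ {0,…,k} and every i ∈ I(x_ℓ), L_i^ℓ(x_ℓ) = f_i(x_ℓ) > 0; and (ii) A ⊆ O_k. -/
open scoped RealInnerProductSpace

section QuadraticCut

variable {E : Type*} [NormedAddCommGroup E] [InnerProductSpace ℝ E]

noncomputable def quadraticCut (g : E → ℝ) (a : ℝ) (b x₀ : E) (y : E) : ℝ :=
  -a * ‖y‖ ^ 2 + ⟪b, y⟫ + a * ‖x₀‖ ^ 2 - ⟪b, x₀⟫ + g x₀

theorem quadraticCut_self (g : E → ℝ) (a : ℝ) (b x₀ : E) :
    quadraticCut g a b x₀ x₀ = g x₀ := by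
  unfold quadraticCut
  ring

theorem quadraticCut_le {g : E → ℝ} {a : ℝ} {b x₀ : E}
    (hsub : ∀ y, g x₀ + a * ‖x₀‖ ^ 2 + ⟪b, y - x₀⟫ ≤ g y + a * ‖y‖ ^ 2) (y : E) :
    quadraticCut g a b x₀ y ≤ g y := by
  have h := hsub y
  rw [inner_sub_right] at h
  unfold quadraticCut
  linarith

end QuadraticCut

theorem stmt2_general (n m : ℕ)
    (f : Fin m → EuclideanSpace ℝ (Fin n) → ℝ) (a : Fin m → ℝ)
    (A : Set (EuclideanSpace ℝ (Fin n))) (hA : A = {x | ∀ i, f i x ≤ 0})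
    (k : ℕ) (x : ℕ → EuclideanSpace ℝ (Fin n)) (b : Fin m → ℕ → EuclideanSpace ℝ (Fin n))
    (hb : ∀ ℓ ≤ k, ∀ i, 0 < f i (x ℓ) →
      ∀ y, f i (x ℓ) + a i * ‖x ℓ‖ ^ 2 + ⟪b i ℓ, y - x ℓ⟫ ≤ f i y + a i * ‖y‖ ^ 2)
    (L : Fin m → ℕ → EuclideanSpace ℝ (Fin n) → ℝ)
    (hL : ∀ i ℓ y, L i ℓ y =
      -(a i) * ‖y‖ ^ 2 + ⟪b i ℓ, y⟫ + a i * ‖x ℓ‖ ^ 2 - ⟪b i ℓ, x ℓ⟫ + f i (x ℓ))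
    (O : Set (EuclideanSpace ℝ (Fin n)))
    (hO : O = {y | ∀ ℓ ≤ k, ∀ i, 0 < f i (x ℓ) → L i ℓ y ≤ 0}) :
    (∀ ℓ ≤ k, ∀ i, 0 < f i (x ℓ) → L i ℓ (x ℓ) = f i (x ℓ) ∧ 0 < L i ℓ (x ℓ)) ∧
    A ⊆ O := by
  have hL_cut : ∀ i ℓ, L i ℓ = quadraticCut (f i) (a i) (b i ℓ) (x ℓ) :=
    fun i ℓ => funext (hL i ℓ)
  subst hA hO
  refine ⟨fun ℓ _ i hpos => ?_, fun y hy ℓ hℓ i hpos => ?_⟩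
  · have hexact : L i ℓ (x ℓ) = f i (x ℓ) := by rw [hL_cut, quadraticCut_self]
    exact ⟨hexact, hexact ▸ hpos⟩
  · rw [hL_cut]
    exact (quadraticCut_le (hb ℓ hℓ i hpos) y).trans (hy i)

theorem stmt2 (n m : ℕ) (hm : 1 ≤ m)
    (f : Fin m → EuclideanSpace ℝ (Fin n) → ℝ) (a : Fin m → ℝ) (ha : ∀ i, 0 ≤ a i)
    (hconv : ∀ i, ConvexOn ℝ Set.univ fun x => f i x + a i * ‖x‖ ^ 2)
    (A : Set (EuclideanSpace ℝ (Fin n))) (hA : A = {x | ∀ i, f i x ≤ 0})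
    (k : ℕ) (x : ℕ → EuclideanSpace ℝ (Fin n)) (b : Fin m → ℕ → EuclideanSpace ℝ (Fin n))
    (hb : ∀ ℓ ≤ k, ∀ i, 0 < f i (x ℓ) →
      ∀ y, f i (x ℓ) + a i * ‖x ℓ‖ ^ 2 + ⟪b i ℓ, y - x ℓ⟫ ≤ f i y + a i * ‖y‖ ^ 2)
    (L : Fin m → ℕ → EuclideanSpace ℝ (Fin n) → ℝ)
    (hL : ∀ i ℓ y, L i ℓ y =
      -(a i) * ‖y‖ ^ 2 + ⟪b i ℓ, y⟫ + a i * ‖x ℓ‖ ^ 2 - ⟪b i ℓ, x ℓ⟫ + f i (x ℓ))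
    (O : Set (EuclideanSpace ℝ (Fin n)))
    (hO : O = {y | ∀ ℓ ≤ k, ∀ i, 0 < f i (x ℓ) → L i ℓ y ≤ 0}) :
    (∀ ℓ ≤ k, ∀ i, 0 < f i (x ℓ) → L i ℓ (x ℓ) = f i (x ℓ) ∧ 0 < L i ℓ (x ℓ)) ∧
    A ⊆ O :=
  stmt2_general n m f a A hA k x b hb L hL O hO
end

section
/- Under the Cutting spheres algorithm hypotheses, the generated sequence (x_k)_{k∈ℕ} possesses a convergent subsequence, and every sequential cluster point x̄ of (x_k) satisfies x̄ ∈ A and ‖x̄ − z‖² = J*; that is, every cluster point is a global solution of the problem: minimize ‖x − z‖² over x ∈ A. -/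
open scoped RealInnerProductSpace
open Filter Topology

/-!
Every feasible point satisfies every cut (by the subgradient inequality), so each `x k` minimises
`J` over a superset of `A`; hence `‖x k - z‖² ≤ J*`, which gives a bounded sequence and, at any
cluster point, `J ≤ J*`. A cluster point `xbar` is feasible: if `f i xbar > 0`, the cut made at
`u = x (φ j)` is satisfied by the later iterate `v = x (φ (j + 1))`, and adding the subgradient
inequality at the reflected point `u + (u - v)` eliminates the (possibly unbounded) subgradient,
leaving `2 f i u ≤ 2 a i ‖u - v‖² + f i (u + (u - v))`, whose limit reads `2 f i xbar ≤ f i xbar`.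
-/

lemma continuous_of_convexOn_add_mul_norm_sq {E : Type*} [NormedAddCommGroup E] [NormedSpace ℝ E]
    [FiniteDimensional ℝ E] {f : E → ℝ} {a : ℝ}
    (hf : ConvexOn ℝ Set.univ fun x => f x + a * ‖x‖ ^ 2) : Continuous f := by
  have hq : Continuous fun x : E => a * ‖x‖ ^ 2 := by fun_prop
  exact (hf.locallyLipschitz.continuous.sub hq).congr fun x => add_sub_cancel_right _ _

lemma exists_subseq_tendsto_of_norm_sub_sq_le {E : Type*} [NormedAddCommGroup E] [ProperSpace E]
    {x : ℕ → E} {z : E} {C : ℝ} (hx : ∀ k, ‖x k - z‖ ^ 2 ≤ C) :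
    ∃ (φ : ℕ → ℕ) (xbar : E), StrictMono φ ∧ Tendsto (x ∘ φ) atTop (𝓝 xbar) := by
  have hball : ∀ k, x k ∈ Metric.closedBall z (Real.sqrt C) := fun k => by
    rw [Metric.mem_closedBall, dist_eq_norm]
    exact Real.le_sqrt_of_sq_le (hx k)
  obtain ⟨xbar, -, φ, hφ, hlim⟩ := (isCompact_closedBall z (Real.sqrt C)).tendsto_subseq hball
  exact ⟨φ, xbar, hφ, hlim⟩

lemma two_mul_le_of_subgradient_of_cut {E : Type*} [NormedAddCommGroup E]
    [InnerProductSpace ℝ E] {g : E → ℝ} {a : ℝ} {b u v : E}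
    (hsub : ∀ y, g u + a * ‖u‖ ^ 2 + ⟪b, y - u⟫ ≤ g y + a * ‖y‖ ^ 2)
    (hcut : -a * ‖v‖ ^ 2 + ⟪b, v⟫ + a * ‖u‖ ^ 2 - ⟪b, u⟫ + g u ≤ 0) :
    2 * g u ≤ 2 * a * ‖u - v‖ ^ 2 + g (u + (u - v)) := by
  have hrefl := hsub (u + (u - v))
  rw [add_sub_cancel_left, inner_sub_right] at hrefl
  have hpar := parallelogram_law_with_norm ℝ u (u - v)
  rw [sub_sub_cancel] at hpar
  have hnorm : ‖u + (u - v)‖ ^ 2 = 2 * ‖u - v‖ ^ 2 + 2 * ‖u‖ ^ 2 - ‖v‖ ^ 2 := by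
    linear_combination hpar
  rw [hnorm] at hrefl
  linarith

lemma nonpos_of_tendsto_of_two_mul_le {E : Type*} [NormedAddCommGroup E] {f : E → ℝ}
    (hf : Continuous f) {a : ℝ} {c d : ℕ → E} {xbar : E}
    (hc : Tendsto c atTop (𝓝 xbar)) (hd : Tendsto d atTop (𝓝 xbar))
    (h : ∀ j, 0 < f (c j) → 2 * f (c j) ≤ 2 * a * ‖c j - d j‖ ^ 2 + f (c j + (c j - d j))) :
    f xbar ≤ 0 := by
  by_contra! hpos
  have hfc : Tendsto (fun j => f (c j)) atTop (𝓝 (f xbar)) := (hf.tendsto xbar).comp hc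
  have hcd : Tendsto (fun j => c j - d j) atTop (𝓝 0) := by simpa using hc.sub hd
  have hrhs : Tendsto (fun j => 2 * a * ‖c j - d j‖ ^ 2 + f (c j + (c j - d j))) atTop
      (𝓝 (2 * a * ‖(0 : E)‖ ^ 2 + f (xbar + 0))) :=
    ((hcd.norm.pow 2).const_mul _).add ((hf.tendsto _).comp (hc.add hcd))
  have hle : 2 * f xbar ≤ 2 * a * ‖(0 : E)‖ ^ 2 + f (xbar + 0) :=
    le_of_tendsto_of_tendsto (hfc.const_mul 2) hrhs
      ((hfc.eventually (eventually_gt_nhds hpos)).mono h)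
  simp only [norm_zero, add_zero] at hle
  linarith

namespace CuttingSpheres

variable {ι E : Type*} [NormedAddCommGroup E] [InnerProductSpace ℝ E]
  {f : ι → E → ℝ} {a : ι → ℝ} {J : E → ℝ} {x : ℕ → E} {O : ℕ → Set E} {b : ℕ → ι → E}

/-- `O (k + 1)` is the paper's `O_k`. -/
def Step (f : ι → E → ℝ) (a : ι → ℝ) (J : E → ℝ) (x : ℕ → E) (O : ℕ → Set E)
    (b : ℕ → ι → E) (k : ℕ) : Prop :=
  ({i : ι | 0 < f i (x k)}.Nonempty →
    (∀ i, 0 < f i (x k) → ∀ y,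
      f i (x k) + a i * ‖x k‖ ^ 2 + ⟪b k i, y - x k⟫ ≤ f i y + a i * ‖y‖ ^ 2) ∧
    O (k + 1) = O k ∩ {y | ∀ i, 0 < f i (x k) →
      -(a i) * ‖y‖ ^ 2 + ⟪b k i, y⟫ + a i * ‖x k‖ ^ 2 - ⟪b k i, x k⟫ + f i (x k) ≤ 0} ∧
    x (k + 1) ∈ O (k + 1) ∧ ∀ y ∈ O (k + 1), J (x (k + 1)) ≤ J y) ∧
  (¬ {i : ι | 0 < f i (x k)}.Nonempty →
    O (k + 1) = O k ∧ x (k + 1) = x k)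

namespace Step

variable {k : ℕ}

lemma succ_subset (h : Step f a J x O b k) : O (k + 1) ⊆ O k := by
  by_cases hI : {i : ι | 0 < f i (x k)}.Nonempty
  · rw [(h.1 hI).2.1]
    exact Set.inter_subset_left
  · rw [(h.2 hI).1]

lemma feasible_subset_succ (h : Step f a J x O b k)
    (hk : {y | ∀ i, f i y ≤ 0} ⊆ O k) : {y | ∀ i, f i y ≤ 0} ⊆ O (k + 1) := by
  by_cases hI : {i : ι | 0 < f i (x k)}.Nonempty
  · obtain ⟨hsub, hO, -⟩ := h.1 hI
    intro y hy
    rw [hO]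
    refine ⟨hk hy, fun i hi => ?_⟩
    have := hsub i hi y
    rw [inner_sub_right] at this
    linarith [hy i]
  · rwa [(h.2 hI).1]

lemma mem_succ_and_le (h : Step f a J x O b k) (hx : x k ∈ O k)
    (hJ : ∀ y ∈ {y | ∀ i, f i y ≤ 0}, J (x k) ≤ J y)
    (hA : {y | ∀ i, f i y ≤ 0} ⊆ O (k + 1)) :
    x (k + 1) ∈ O (k + 1) ∧ ∀ y ∈ {y | ∀ i, f i y ≤ 0}, J (x (k + 1)) ≤ J y := by
  by_cases hI : {i : ι | 0 < f i (x k)}.Nonempty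
  · obtain ⟨-, -, hmem, hmin⟩ := h.1 hI
    exact ⟨hmem, fun y hy => hmin y (hA hy)⟩
  · obtain ⟨hO, hxk⟩ := h.2 hI
    rw [hO, hxk]
    exact ⟨hx, hJ⟩

lemma two_mul_le_of_mem {i : ι} {y : E} (h : Step f a J x O b k)
    (hi : 0 < f i (x k)) (hy : y ∈ O (k + 1)) :
    2 * f i (x k) ≤ 2 * a i * ‖x k - y‖ ^ 2 + f i (x k + (x k - y)) := by
  obtain ⟨hsub, hO, -⟩ := h.1 ⟨i, hi⟩
  rw [hO] at hy
  exact two_mul_le_of_subgradient_of_cut (hsub i hi) (hy.2 i hi)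

end Step

lemma antitone_sets (hstep : ∀ k, Step f a J x O b k) : Antitone O :=
  antitone_nat_of_succ_le fun k => (hstep k).succ_subset

lemma feasible_subset (hstep : ∀ k, Step f a J x O b k) (hO0 : O 0 = Set.univ) :
    ∀ k, {y | ∀ i, f i y ≤ 0} ⊆ O k
  | 0 => hO0 ▸ Set.subset_univ _
  | k + 1 => (hstep k).feasible_subset_succ (feasible_subset hstep hO0 k)

lemma mem_and_le_of_feasible (hstep : ∀ k, Step f a J x O b k) (hO0 : O 0 = Set.univ)
    (hx0 : ∀ y, J (x 0) ≤ J y) :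
    ∀ k, x k ∈ O k ∧ ∀ y ∈ {y | ∀ i, f i y ≤ 0}, J (x k) ≤ J y
  | 0 => ⟨hO0 ▸ Set.mem_univ _, fun y _ => hx0 y⟩
  | k + 1 =>
    have ih := mem_and_le_of_feasible hstep hO0 hx0 k
    (hstep k).mem_succ_and_le ih.1 ih.2 (feasible_subset hstep hO0 (k + 1))

lemma feasible_of_tendsto_subseq (hstep : ∀ k, Step f a J x O b k)
    (hf : ∀ i, Continuous (f i)) (hmem : ∀ k, x k ∈ O k) {φ : ℕ → ℕ} {xbar : E}
    (hφ : StrictMono φ) (hlim : Tendsto (x ∘ φ) atTop (𝓝 xbar)) (i : ι) : f i xbar ≤ 0 :=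
  nonpos_of_tendsto_of_two_mul_le (hf i) hlim (hlim.comp (tendsto_add_atTop_nat 1)) fun j hj =>
    (hstep (φ j)).two_mul_le_of_mem hj (antitone_sets hstep (hφ j.lt_succ_self) (hmem _))

end CuttingSpheres

theorem stmt8_general (n m : ℕ)
    (f : Fin m → EuclideanSpace ℝ (Fin n) → ℝ) (a : Fin m → ℝ)
    (hconv : ∀ i, ConvexOn ℝ Set.univ fun x => f i x + a i * ‖x‖ ^ 2)
    (z : EuclideanSpace ℝ (Fin n)) (J : EuclideanSpace ℝ (Fin n) → ℝ)
    (hJ : ∀ x, J x = ‖x - z‖ ^ 2)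
    (A : Set (EuclideanSpace ℝ (Fin n))) (hA : A = {x | ∀ i, f i x ≤ 0}) (hAne : A.Nonempty)
    (Jstar : ℝ) (hJstar : Jstar = ⨅ x : A, J x)
    (x : ℕ → EuclideanSpace ℝ (Fin n)) (O : ℕ → Set (EuclideanSpace ℝ (Fin n)))
    (b : ℕ → Fin m → EuclideanSpace ℝ (Fin n))
    (hx0 : x 0 = z) (hO0 : O 0 = Set.univ)
    (hstep : ∀ k : ℕ,
      ({i : Fin m | 0 < f i (x k)}.Nonempty →
        (∀ i, 0 < f i (x k) → ∀ y,
          f i (x k) + a i * ‖x k‖ ^ 2 + ⟪b k i, y - x k⟫ ≤ f i y + a i * ‖y‖ ^ 2) ∧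
        O (k + 1) = O k ∩ {y | ∀ i, 0 < f i (x k) →
          -(a i) * ‖y‖ ^ 2 + ⟪b k i, y⟫ + a i * ‖x k‖ ^ 2 - ⟪b k i, x k⟫ + f i (x k) ≤ 0} ∧
        x (k + 1) ∈ O (k + 1) ∧ ∀ y ∈ O (k + 1), J (x (k + 1)) ≤ J y) ∧
      (¬ {i : Fin m | 0 < f i (x k)}.Nonempty →
        O (k + 1) = O k ∧ x (k + 1) = x k)) :
    (∃ (φ : ℕ → ℕ) (xbar : EuclideanSpace ℝ (Fin n)),
      StrictMono φ ∧ Tendsto (x ∘ φ) atTop (𝓝 xbar)) ∧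
    (∀ (xbar : EuclideanSpace ℝ (Fin n)) (φ : ℕ → ℕ),
      StrictMono φ → Tendsto (x ∘ φ) atTop (𝓝 xbar) →
      xbar ∈ A ∧ ‖xbar - z‖ ^ 2 = Jstar) := by
  subst hA hJstar
  have := hAne.to_subtype
  have hJ_nonneg : ∀ y, 0 ≤ J y := fun y => hJ y ▸ sq_nonneg _
  have hinv := CuttingSpheres.mem_and_le_of_feasible hstep hO0 fun y => by
    rw [hJ, hx0, sub_self, norm_zero, zero_pow two_ne_zero]
    exact hJ_nonneg y
  have hle : ∀ k, J (x k) ≤ ⨅ y : {y | ∀ i, f i y ≤ 0}, J y :=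
    fun k => le_ciInf fun y => (hinv k).2 y y.2
  refine ⟨exists_subseq_tendsto_of_norm_sub_sq_le fun k => hJ (x k) ▸ hle k,
    fun xbar φ hφ hlim => ?_⟩
  have hxbar : xbar ∈ {y | ∀ i, f i y ≤ 0} :=
    CuttingSpheres.feasible_of_tendsto_subseq hstep
      (fun i => continuous_of_convexOn_add_mul_norm_sq (hconv i)) (fun k => (hinv k).1) hφ hlim
  have hJ_cont : Continuous J := by
    rw [funext hJ]
    fun_prop
  rw [← hJ]
  refine ⟨hxbar, le_antisymm ?_ ?_⟩
  · exact le_of_tendsto ((hJ_cont.tendsto xbar).comp hlim) (.of_forall fun j => hle (φ j))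
  · have hbdd : BddBelow (Set.range fun y : {y | ∀ i, f i y ≤ 0} => J y) :=
      ⟨0, Set.forall_mem_range.2 fun y => hJ_nonneg y⟩
    exact ciInf_le hbdd ⟨xbar, hxbar⟩

/-- Convergence of the Cutting spheres algorithm: the generated sequence has a
convergent subsequence, and every sequential cluster point is a global solution. -/
theorem stmt8 (n m : ℕ) (hm : 1 ≤ m)
    (f : Fin m → EuclideanSpace ℝ (Fin n) → ℝ) (a : Fin m → ℝ) (ha : ∀ i, 0 ≤ a i)
    (hconv : ∀ i, ConvexOn ℝ Set.univ fun x => f i x + a i * ‖x‖ ^ 2)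
    (z : EuclideanSpace ℝ (Fin n)) (J : EuclideanSpace ℝ (Fin n) → ℝ)
    (hJ : ∀ x, J x = ‖x - z‖ ^ 2)
    (A : Set (EuclideanSpace ℝ (Fin n))) (hA : A = {x | ∀ i, f i x ≤ 0}) (hAne : A.Nonempty)
    (Jstar : ℝ) (hJstar : Jstar = ⨅ x : A, J x)
    (x : ℕ → EuclideanSpace ℝ (Fin n)) (O : ℕ → Set (EuclideanSpace ℝ (Fin n)))
    (b : ℕ → Fin m → EuclideanSpace ℝ (Fin n))
    (hx0 : x 0 = z) (hO0 : O 0 = Set.univ)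
    (hstep : ∀ k : ℕ,
      ({i : Fin m | 0 < f i (x k)}.Nonempty →
        (∀ i, 0 < f i (x k) → ∀ y,
          f i (x k) + a i * ‖x k‖ ^ 2 + ⟪b k i, y - x k⟫ ≤ f i y + a i * ‖y‖ ^ 2) ∧
        O (k + 1) = O k ∩ {y | ∀ i, 0 < f i (x k) →
          -(a i) * ‖y‖ ^ 2 + ⟪b k i, y⟫ + a i * ‖x k‖ ^ 2 - ⟪b k i, x k⟫ + f i (x k) ≤ 0} ∧
        x (k + 1) ∈ O (k + 1) ∧ ∀ y ∈ O (k + 1), J (x (k + 1)) ≤ J y) ∧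
      (¬ {i : Fin m | 0 < f i (x k)}.Nonempty →
        O (k + 1) = O k ∧ x (k + 1) = x k)) :
    (∃ (φ : ℕ → ℕ) (xbar : EuclideanSpace ℝ (Fin n)),
      StrictMono φ ∧ Tendsto (x ∘ φ) atTop (𝓝 xbar)) ∧
    (∀ (xbar : EuclideanSpace ℝ (Fin n)) (φ : ℕ → ℕ),
      StrictMono φ → Tendsto (x ∘ φ) atTop (𝓝 xbar) →
      xbar ∈ A ∧ ‖xbar - z‖ ^ 2 = Jstar) :=
  stmt8_general n m f a hconv z J hJ A hA hAne Jstar hJstar x O b hx0 hO0 hstep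
end

section
/- Under the Cutting spheres algorithm hypotheses, the sequence (J(x_k))_{k∈ℕ} = (‖x_k − z‖²)_{k∈ℕ} is nondecreasing, bounded above by J*, and converges to J*. -/
open scoped RealInnerProductSpace
open Filter Topology

/-!
The cuts only ever remove infeasible points, so every `O k` contains the feasible set `A`; as the
`O k` decrease and `x k` minimises `J` over `O k`, the values `J (x k)` increase and stay below
`J*`. The iterates lie in a ball around `z`, so a subsequence converges to some `w`, and it
suffices to show `w ∈ A`: then `J (x k)` increases to `J w ≥ J*`. If `f i w > 0`, then
`f i (x k) > 0` along the subsequence, so `w` (a limit of later iterates) satisfies each of the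
corresponding cuts; comparing each cut at `w` with the subgradient inequality of the convex
function `f i + a i ‖·‖²` at the reflection of `w` through `x k` gives `f i w ≤ 0` in the limit.
-/

theorem continuous_of_convexOn_add_mul_sq_norm {E : Type*} [NormedAddCommGroup E]
    [NormedSpace ℝ E] [FiniteDimensional ℝ E] {f : E → ℝ} {a : ℝ}
    (h : ConvexOn ℝ Set.univ fun x => f x + a * ‖x‖ ^ 2) : Continuous f := by
  have hg := continuousOn_univ.mp (h.continuousOn isOpen_univ)
  exact (hg.sub (by fun_prop : Continuous fun x : E => a * ‖x‖ ^ 2)).congr fun x =>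
    add_sub_cancel_right _ _

theorem monotone_comp_of_isMinOn {α β : Type*} [Preorder β] {J : α → β} {x : ℕ → α}
    {O : ℕ → Set α} (hO : Antitone O) (hx : ∀ k, x k ∈ O k) (hmin : ∀ k, IsMinOn J (O k) (x k)) :
    Monotone (J ∘ x) :=
  monotone_nat_of_le_succ fun k => hmin k (hO k.le_succ (hx (k + 1)))

section SupportingCuts

variable {E : Type*} [NormedAddCommGroup E] [InnerProductSpace ℝ E]

/-- The affine minorant of `g` at `u j` is at most `c` at `w` and at most `g (2 • u j - w)` at the
reflection of `w` through `u j`; these two values average to `g (u j)`, so `2 g w ≤ c + g w`. -/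
theorem le_of_tendsto_of_supporting_cuts {ι : Type*} {l : Filter ι} [l.NeBot] {g : E → ℝ}
    {u β : ι → E} {w : E} {c : ℝ} (hg : ContinuousAt g w) (hu : Tendsto u l (𝓝 w))
    (hcut : ∀ᶠ j in l, (∀ y, g (u j) + ⟪β j, y - u j⟫ ≤ g y) ∧ g (u j) + ⟪β j, w - u j⟫ ≤ c) :
    g w ≤ c := by
  have hreflect : Tendsto (fun j => (2 : ℝ) • u j - w) l (𝓝 w) := by
    simpa [two_smul] using (hu.const_smul (2 : ℝ)).sub_const w
  have hineq : ∀ᶠ j in l, 2 * g (u j) ≤ c + g ((2 : ℝ) • u j - w) := by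
    filter_upwards [hcut] with j ⟨hsub, hw⟩
    have hy := hsub ((2 : ℝ) • u j - w)
    rw [show (2 : ℝ) • u j - w - u j = -(w - u j) by rw [two_smul]; abel, inner_neg_right] at hy
    linarith
  have := le_of_tendsto_of_tendsto ((hg.tendsto.comp hu).const_mul 2)
    (tendsto_const_nhds.add (hg.tendsto.comp hreflect)) hineq
  linarith

/-- The step rule of the Cutting spheres algorithm, shifted by one index: `O (k + 1)` is the
paper's `O_k`, so that `O 0 = ℝⁿ` plays the role of `O_{-1}`. -/
def IsCuttingSpheresSeq {ι : Type*} (f : ι → E → ℝ) (a : ι → ℝ) (J : E → ℝ) (x : ℕ → E)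
    (O : ℕ → Set E) (b : ℕ → ι → E) : Prop :=
  ∀ k : ℕ,
    ({i : ι | 0 < f i (x k)}.Nonempty →
      (∀ i, 0 < f i (x k) → ∀ y,
        f i (x k) + a i * ‖x k‖ ^ 2 + ⟪b k i, y - x k⟫ ≤ f i y + a i * ‖y‖ ^ 2) ∧
      O (k + 1) = O k ∩ {y | ∀ i, 0 < f i (x k) →
        -(a i) * ‖y‖ ^ 2 + ⟪b k i, y⟫ + a i * ‖x k‖ ^ 2 - ⟪b k i, x k⟫ + f i (x k) ≤ 0} ∧
      x (k + 1) ∈ O (k + 1) ∧ ∀ y ∈ O (k + 1), J (x (k + 1)) ≤ J y) ∧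
    (¬ {i : ι | 0 < f i (x k)}.Nonempty →
      O (k + 1) = O k ∧ x (k + 1) = x k)

namespace IsCuttingSpheresSeq

variable {ι : Type*} {f : ι → E → ℝ} {a : ι → ℝ} {J : E → ℝ} {x : ℕ → E} {O : ℕ → Set E}
  {b : ℕ → ι → E} (h : IsCuttingSpheresSeq f a J x O b)
include h

theorem antitone : Antitone O := by
  refine antitone_nat_of_succ_le fun k => ?_
  by_cases hk : {i | 0 < f i (x k)}.Nonempty
  · rw [((h k).1 hk).2.1]
    exact Set.inter_subset_left
  · rw [((h k).2 hk).1]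

theorem mem (h0 : x 0 ∈ O 0) (k : ℕ) : x k ∈ O k := by
  induction k with
  | zero => exact h0
  | succ k ih =>
    by_cases hk : {i | 0 < f i (x k)}.Nonempty
    · exact ((h k).1 hk).2.2.1
    · obtain ⟨hO, hx⟩ := (h k).2 hk
      rwa [hO, hx]

theorem isMinOn (h0 : IsMinOn J (O 0) (x 0)) (k : ℕ) : IsMinOn J (O k) (x k) := by
  induction k with
  | zero => exact h0
  | succ k ih =>
    by_cases hk : {i | 0 < f i (x k)}.Nonempty
    · exact isMinOn_iff.mpr ((h k).1 hk).2.2.2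
    · obtain ⟨hO, hx⟩ := (h k).2 hk
      rwa [hO, hx]

theorem feasible_subset (h0 : {y | ∀ i, f i y ≤ 0} ⊆ O 0) (k : ℕ) :
    {y | ∀ i, f i y ≤ 0} ⊆ O k := by
  induction k with
  | zero => exact h0
  | succ k ih =>
    by_cases hk : {i | 0 < f i (x k)}.Nonempty
    · obtain ⟨hsub, hO, -⟩ := (h k).1 hk
      rw [hO]
      refine fun y hy => ⟨ih hy, fun i hi => ?_⟩
      have hyi := hsub i hi y
      rw [inner_sub_right] at hyi
      linarith [hy i]
    · rwa [((h k).2 hk).1]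

theorem subset_cut {k : ℕ} {i : ι} (hi : 0 < f i (x k)) :
    O (k + 1) ⊆ {y | f i (x k) + a i * ‖x k‖ ^ 2 + ⟪b k i, y - x k⟫ ≤ a i * ‖y‖ ^ 2} := by
  rw [((h k).1 ⟨i, hi⟩).2.1]
  intro y hy
  have hyi := hy.2 i hi
  change (_ : ℝ) ≤ _
  rw [inner_sub_right]
  linarith

theorem le_zero_of_tendsto_subseq (hf : ∀ i, Continuous (f i)) (hx : ∀ k, x k ∈ O k)
    {φ : ℕ → ℕ} (hφ : StrictMono φ) {w : E} (hw : Tendsto (x ∘ φ) atTop (𝓝 w)) (i : ι) :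
    f i w ≤ 0 := by
  refine le_of_not_gt fun hwi => ?_
  have hpos : ∀ᶠ j in atTop, 0 < f i (x (φ j)) :=
    ((hf i).continuousAt.tendsto.comp hw).eventually (eventually_gt_nhds hwi)
  have hcut : ∀ᶠ j in atTop,
      (∀ y, f i (x (φ j)) + a i * ‖x (φ j)‖ ^ 2 + ⟪b (φ j) i, y - x (φ j)⟫
        ≤ f i y + a i * ‖y‖ ^ 2) ∧
      f i (x (φ j)) + a i * ‖x (φ j)‖ ^ 2 + ⟪b (φ j) i, w - x (φ j)⟫ ≤ a i * ‖w‖ ^ 2 := by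
    filter_upwards [hpos] with j hj
    refine ⟨((h (φ j)).1 ⟨i, hj⟩).1 i hj, ?_⟩
    have hclosed : IsClosed {y | f i (x (φ j)) + a i * ‖x (φ j)‖ ^ 2
        + ⟪b (φ j) i, y - x (φ j)⟫ ≤ a i * ‖y‖ ^ 2} :=
      isClosed_le (by fun_prop) (by fun_prop)
    refine hclosed.mem_of_tendsto hw ?_
    filter_upwards [eventually_gt_atTop j] with j' hj'
    exact h.subset_cut hj (h.antitone (hφ hj') (hx (φ j')))
  have := le_of_tendsto_of_supporting_cuts
    (g := fun y => f i y + a i * ‖y‖ ^ 2) (by have := hf i; fun_prop) hw hcut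
  linarith

end IsCuttingSpheresSeq

end SupportingCuts

theorem stmt10_general (n m : ℕ)
    (f : Fin m → EuclideanSpace ℝ (Fin n) → ℝ) (a : Fin m → ℝ)
    (hconv : ∀ i, ConvexOn ℝ Set.univ fun x => f i x + a i * ‖x‖ ^ 2)
    (z : EuclideanSpace ℝ (Fin n)) (J : EuclideanSpace ℝ (Fin n) → ℝ)
    (hJ : ∀ x, J x = ‖x - z‖ ^ 2)
    (A : Set (EuclideanSpace ℝ (Fin n))) (hA : A = {x | ∀ i, f i x ≤ 0}) (hAne : A.Nonempty)
    (Jstar : ℝ) (hJstar : Jstar = ⨅ x : A, J x)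
    (x : ℕ → EuclideanSpace ℝ (Fin n)) (O : ℕ → Set (EuclideanSpace ℝ (Fin n)))
    (b : ℕ → Fin m → EuclideanSpace ℝ (Fin n))
    (hx0 : x 0 = z) (hO0 : O 0 = Set.univ)
    (hstep : ∀ k : ℕ,
      ({i : Fin m | 0 < f i (x k)}.Nonempty →
        (∀ i, 0 < f i (x k) → ∀ y,
          f i (x k) + a i * ‖x k‖ ^ 2 + ⟪b k i, y - x k⟫ ≤ f i y + a i * ‖y‖ ^ 2) ∧
        O (k + 1) = O k ∩ {y | ∀ i, 0 < f i (x k) →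
          -(a i) * ‖y‖ ^ 2 + ⟪b k i, y⟫ + a i * ‖x k‖ ^ 2 - ⟪b k i, x k⟫ + f i (x k) ≤ 0} ∧
        x (k + 1) ∈ O (k + 1) ∧ ∀ y ∈ O (k + 1), J (x (k + 1)) ≤ J y) ∧
      (¬ {i : Fin m | 0 < f i (x k)}.Nonempty →
        O (k + 1) = O k ∧ x (k + 1) = x k)) :
    Monotone (fun k => J (x k)) ∧ (∀ k, J (x k) ≤ Jstar) ∧
    Tendsto (fun k => J (x k)) atTop (𝓝 Jstar) := by
  have hseq : IsCuttingSpheresSeq f a J x O b := hstep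
  obtain rfl : J = fun y => ‖y - z‖ ^ 2 := funext hJ
  have hmem : ∀ k, x k ∈ O k := hseq.mem (by simp [hO0])
  have hmin := hseq.isMinOn (fun y _ => by simp [hx0])
  have hAO : ∀ k, A ⊆ O k := hA ▸ hseq.feasible_subset (by simp [hO0])
  have hmono := monotone_comp_of_isMinOn hseq.antitone hmem hmin
  have hub : ∀ k, ‖x k - z‖ ^ 2 ≤ Jstar := fun k => by
    have := hAne.to_subtype
    exact hJstar ▸ le_ciInf fun y => hmin k (hAO k y.2)
  refine ⟨hmono, hub, ?_⟩
  obtain ⟨w, -, φ, hφ, hw⟩ := (isCompact_closedBall z √Jstar).tendsto_subseq fun k => by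
    simpa [dist_eq_norm] using Real.abs_le_sqrt (hub k)
  have hwA : w ∈ A := hA ▸ hseq.le_zero_of_tendsto_subseq
    (fun i => continuous_of_convexOn_add_mul_sq_norm (hconv i)) hmem hφ hw
  have hlim : Tendsto (fun k => ‖x k - z‖ ^ 2) atTop (𝓝 (‖w - z‖ ^ 2)) :=
    (tendsto_iff_tendsto_subseq_of_monotone hmono hφ.tendsto_atTop).2
      (((continuous_id.sub continuous_const).norm.pow 2).continuousAt.tendsto.comp hw)
  have hbdd : BddBelow (Set.range fun y : A => ‖(y : EuclideanSpace ℝ (Fin n)) - z‖ ^ 2) :=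
    ⟨0, by rintro _ ⟨y, rfl⟩; positivity⟩
  rwa [le_antisymm (le_of_tendsto' hlim hub) (hJstar ▸ ciInf_le hbdd ⟨w, hwA⟩)] at hlim

/-- The objective values of the Cutting spheres sequence are nondecreasing,
bounded above by the optimal value, and converge to it. -/
theorem stmt10 (n m : ℕ) (hm : 1 ≤ m)
    (f : Fin m → EuclideanSpace ℝ (Fin n) → ℝ) (a : Fin m → ℝ) (ha : ∀ i, 0 ≤ a i)
    (hconv : ∀ i, ConvexOn ℝ Set.univ fun x => f i x + a i * ‖x‖ ^ 2)
    (z : EuclideanSpace ℝ (Fin n)) (J : EuclideanSpace ℝ (Fin n) → ℝ)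
    (hJ : ∀ x, J x = ‖x - z‖ ^ 2)
    (A : Set (EuclideanSpace ℝ (Fin n))) (hA : A = {x | ∀ i, f i x ≤ 0}) (hAne : A.Nonempty)
    (Jstar : ℝ) (hJstar : Jstar = ⨅ x : A, J x)
    (x : ℕ → EuclideanSpace ℝ (Fin n)) (O : ℕ → Set (EuclideanSpace ℝ (Fin n)))
    (b : ℕ → Fin m → EuclideanSpace ℝ (Fin n))
    (hx0 : x 0 = z) (hO0 : O 0 = Set.univ)
    (hstep : ∀ k : ℕ,
      ({i : Fin m | 0 < f i (x k)}.Nonempty →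
        (∀ i, 0 < f i (x k) → ∀ y,
          f i (x k) + a i * ‖x k‖ ^ 2 + ⟪b k i, y - x k⟫ ≤ f i y + a i * ‖y‖ ^ 2) ∧
        O (k + 1) = O k ∩ {y | ∀ i, 0 < f i (x k) →
          -(a i) * ‖y‖ ^ 2 + ⟪b k i, y⟫ + a i * ‖x k‖ ^ 2 - ⟪b k i, x k⟫ + f i (x k) ≤ 0} ∧
        x (k + 1) ∈ O (k + 1) ∧ ∀ y ∈ O (k + 1), J (x (k + 1)) ≤ J y) ∧
      (¬ {i : Fin m | 0 < f i (x k)}.Nonempty →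
        O (k + 1) = O k ∧ x (k + 1) = x k)) :
    Monotone (fun k => J (x k)) ∧ (∀ k, J (x k) ≤ Jstar) ∧
    Tendsto (fun k => J (x k)) atTop (𝓝 Jstar) :=
  stmt10_general n m f a hconv z J hJ A hA hAne Jstar hJstar x O b hx0 hO0 hstep
end

section
/- Let m ≥ 1 and, for i ∈ I = {1,…,m}, let f_i : ℝⁿ → ℝ and a_i ≥ 0 be such that x ↦ f_i(x) + a_i‖x‖² is convex on ℝⁿ. Let z ∈ ℝⁿ, J(x) = ‖x − z‖², and A = {x ∈ ℝⁿ : f_i(x) ≤ 0 for all i ∈ I}. Let O ⊆ ℝⁿ be a set with A ⊆ O and let x̄ ∈ O attain the minimum of J over O. For every i ∈ I(x̄) = {i ∈ I : f_i(x̄) > 0}, let b_i ∈ ℝⁿ satisfy f_i(y) + a_i‖y‖² ≥ f_i(x̄) + a_i‖x̄‖² + ⟨b_i, y − x̄⟩ for all y ∈ ℝⁿ. Then A is contained in the restart set {x ∈ ℝⁿ : −a_i‖x‖² + ⟨b_i, x⟩ + a_i‖x̄‖² − ⟨b_i, x̄⟩ + f_i(x̄) ≤ 0 for all i ∈ I(x̄)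 and J(x) ≥ J(x̄)}. -/
open scoped RealInnerProductSpace

theorem quadratic_minorant_nonpos_of_subgradient {E : Type*} [NormedAddCommGroup E]
    [InnerProductSpace ℝ E] {g : E → ℝ} {a : ℝ} {b x₀ y : E}
    (hsub : g x₀ + a * ‖x₀‖ ^ 2 + ⟪b, y - x₀⟫ ≤ g y + a * ‖y‖ ^ 2) (hy : g y ≤ 0) :
    -a * ‖y‖ ^ 2 + ⟪b, y⟫ + a * ‖x₀‖ ^ 2 - ⟪b, x₀⟫ + g x₀ ≤ 0 := by
  rw [inner_sub_right] at hsub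
  linarith

theorem stmt11_general (n m : ℕ)
    (f : Fin m → EuclideanSpace ℝ (Fin n) → ℝ) (a : Fin m → ℝ)
    (J : EuclideanSpace ℝ (Fin n) → ℝ)
    (A : Set (EuclideanSpace ℝ (Fin n))) (hA : A = {x | ∀ i, f i x ≤ 0})
    (O : Set (EuclideanSpace ℝ (Fin n))) (hAO : A ⊆ O)
    (xbar : EuclideanSpace ℝ (Fin n)) (hmin : ∀ y ∈ O, J xbar ≤ J y)
    (b : Fin m → EuclideanSpace ℝ (Fin n))
    (hb : ∀ i, 0 < f i xbar →
      ∀ y, f i xbar + a i * ‖xbar‖ ^ 2 + ⟪b i, y - xbar⟫ ≤ f i y + a i * ‖y‖ ^ 2) :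
    A ⊆ {y | (∀ i, 0 < f i xbar →
      -(a i) * ‖y‖ ^ 2 + ⟪b i, y⟫ + a i * ‖xbar‖ ^ 2 - ⟪b i, xbar⟫ + f i xbar ≤ 0) ∧
      J xbar ≤ J y} := by
  intro y hy
  have hfy : ∀ i, f i y ≤ 0 := by
    rw [hA] at hy
    exact hy
  exact ⟨fun i hi => quadratic_minorant_nonpos_of_subgradient (hb i hi y) (hfy i),
    hmin y (hAO hy)⟩

theorem stmt11 (n m : ℕ) (hm : 1 ≤ m)
    (f : Fin m → EuclideanSpace ℝ (Fin n) → ℝ) (a : Fin m → ℝ) (ha : ∀ i, 0 ≤ a i)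
    (hconv : ∀ i, ConvexOn ℝ Set.univ fun x => f i x + a i * ‖x‖ ^ 2)
    (z : EuclideanSpace ℝ (Fin n)) (J : EuclideanSpace ℝ (Fin n) → ℝ)
    (hJ : ∀ x, J x = ‖x - z‖ ^ 2)
    (A : Set (EuclideanSpace ℝ (Fin n))) (hA : A = {x | ∀ i, f i x ≤ 0})
    (O : Set (EuclideanSpace ℝ (Fin n))) (hAO : A ⊆ O)
    (xbar : EuclideanSpace ℝ (Fin n)) (hxbar : xbar ∈ O) (hmin : ∀ y ∈ O, J xbar ≤ J y)
    (b : Fin m → EuclideanSpace ℝ (Fin n))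
    (hb : ∀ i, 0 < f i xbar →
      ∀ y, f i xbar + a i * ‖xbar‖ ^ 2 + ⟪b i, y - xbar⟫ ≤ f i y + a i * ‖y‖ ^ 2) :
    A ⊆ {y | (∀ i, 0 < f i xbar →
      -(a i) * ‖y‖ ^ 2 + ⟪b i, y⟫ + a i * ‖xbar‖ ^ 2 - ⟪b i, xbar⟫ + f i xbar ≤ 0) ∧
      J xbar ≤ J y} :=
  stmt11_general n m f a J A hA O hAO xbar hmin b hb
end

section
/- Let m ≥ 1 and, for i ∈ I = {1,…,m}, let f̃_i : ℝⁿ → ℝ be convex and let ρ_i ≥ 0; set f_i(x) = f̃_i(x) − (ρ_i/2)‖x‖². Let Ã = {x ∈ ℝⁿ : f̃_i(x) ≤ 0 for all i} and A = {x ∈ ℝⁿ : f_i(x) ≤ 0 for all i}; note Ã ⊆ A. Assume that the interior of Ã equals {x ∈ ℝⁿ : f̃_i(x) < 0 for all i} and that this set is nonempty, and assume there exists κ > 0 such that for every x̄ in the boundary of Ã there exists ā in the interior of Ã with ‖x̄ − ā‖ ≤ κ · min_{1≤i≤m}(−f̃_i(ā)). Then there exists τ > 0 such that for all x ∈ ℝⁿ,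 dist(x, A) ≤ dist(x, Ã) ≤ τ · max_{1≤i≤m} max(f̃_i(x), 0). -/
/-!
Let `d = dist(x, Ã)` for `x ∉ Ã` and let `p` be a nearest point of `Ã`; it lies on the frontier,
so the hypothesis gives `a ∈ Ã` with `‖p - a‖ ≤ κ r`, where `r = minᵢ (-f̃ᵢ a) > 0`. If `s` is the
largest violation `maxᵢ f̃ᵢ x`, convexity puts `(r • x + s • a) / (s + r)` into `Ã`, hence
`d ≤ s / (s + r) · ‖x - a‖ ≤ s / (s + r) · (d + κ r)`, which rearranges to `d ≤ κ s`.
-/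

open Metric Set Filter Topology

section NormedSpace

variable {E : Type*} [NormedAddCommGroup E] [NormedSpace ℝ E]

theorem notMem_interior_of_dist_eq_infDist {s : Set E} {x p : E} (hx : x ∉ s)
    (hp : dist x p = infDist x s) : p ∉ interior s := by
  intro hp_int
  have hpx : p ≠ x := fun h => hx (h ▸ interior_subset hp_int)
  have hnear : ∀ᶠ t in 𝓝 (0 : ℝ), AffineMap.lineMap p x t ∈ s ∧ t < 1 :=
    ((AffineMap.lineMap_continuous.tendsto' 0 p (by simp)).eventually
      (mem_interior_iff_mem_nhds.1 hp_int)).and (eventually_lt_nhds one_pos)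
  obtain ⟨t, ⟨hts, ht1⟩, ht0⟩ :=
    ((hnear.filter_mono nhdsWithin_le_nhds).and (self_mem_nhdsWithin (s := Ioi 0))).exists
  have hshorter : dist x p ≤ (1 - t) * dist x p :=
    calc dist x p = infDist x s := hp
      _ ≤ dist x (AffineMap.lineMap p x t) := infDist_le_dist_of_mem hts
      _ = (1 - t) * dist x p := by
        rw [dist_comm, dist_lineMap_right, Real.norm_of_nonneg (by linarith [ht1]), dist_comm]
  nlinarith [dist_pos.2 hpx.symm, show (0 : ℝ) < t from ht0]

theorem exists_mem_frontier_dist_eq_infDist [ProperSpace E] {s : Set E} (hs : IsClosed s)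
    (hne : s.Nonempty) {x : E} (hx : x ∉ s) : ∃ p ∈ frontier s, dist x p = infDist x s := by
  obtain ⟨p, hps, hp⟩ := hs.exists_infDist_eq_dist hne x
  exact ⟨p, hs.frontier_eq ▸ ⟨hps, notMem_interior_of_dist_eq_infDist hx hp.symm⟩, hp.symm⟩

variable {ι : Type*} {g : ι → E → ℝ}

theorem infDist_sublevel_le_of_convexOn {a x : E} {r s : ℝ} (hg : ∀ i, ConvexOn ℝ univ (g i))
    (hr : 0 < r) (hs : 0 ≤ s) (ha : ∀ i, g i a ≤ -r) (hx : ∀ i, g i x ≤ s) :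
    infDist x {y | ∀ i, g i y ≤ 0} ≤ s / (s + r) * dist x a := by
  set t := s / (s + r)
  have ht0 : 0 ≤ t := by positivity
  have ht1 : 1 - t = r / (s + r) := by simp only [t]; field_simp; ring
  have hmem : AffineMap.lineMap x a t ∈ {y | ∀ i, g i y ≤ 0} := fun i => by
    rw [AffineMap.lineMap_apply_module]
    calc g i ((1 - t) • x + t • a) ≤ (1 - t) * g i x + t * g i a :=
          (hg i).2 trivial trivial (by rw [ht1]; positivity) ht0 (by ring)
      _ ≤ (1 - t) * s + t * -r := by
          gcongr
          · rw [ht1]; positivity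
          · exact hx i
          · exact ha i
      _ = 0 := by rw [ht1]; simp only [t]; field_simp; ring
  calc infDist x {y | ∀ i, g i y ≤ 0} ≤ dist x (AffineMap.lineMap x a t) :=
        infDist_le_dist_of_mem hmem
    _ = t * dist x a := by rw [dist_left_lineMap, Real.norm_of_nonneg ht0]

theorem isClosed_sublevel_of_convexOn [FiniteDimensional ℝ E]
    (hg : ∀ i, ConvexOn ℝ univ (g i)) :
    IsClosed {y | ∀ i, g i y ≤ 0} := by
  simp only [ofPred_forall]
  exact isClosed_iInter fun i =>
    isClosed_le (continuousOn_univ.1 ((hg i).continuousOn isOpen_univ)) continuous_const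

theorem infDist_sublevel_le_mul_iSup [FiniteDimensional ℝ E] [Finite ι]
    (hg : ∀ i, ConvexOn ℝ univ (g i)) (hne : {y | ∀ i, g i y ≤ 0}.Nonempty) {κ : ℝ}
    (hbd : ∀ p ∈ frontier {y | ∀ i, g i y ≤ 0}, ∃ a ∈ interior {y | ∀ i, g i y ≤ 0},
      dist p a ≤ κ * ⨅ i, -g i a) (x : E) :
    infDist x {y | ∀ i, g i y ≤ 0} ≤ κ * ⨆ i, max (g i x) 0 := by
  set S := {y | ∀ i, g i y ≤ 0}
  set σ := ⨆ i, max (g i x) 0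
  have hσ : ∀ i, g i x ≤ σ := fun i =>
    (le_max_left _ 0).trans (le_ciSup (finite_range fun i => max (g i x) 0).bddAbove i)
  have hσ0 : 0 ≤ σ := Real.iSup_nonneg fun i => le_max_right _ _
  by_cases hxS : x ∈ S
  · have : σ = 0 := le_antisymm (Real.iSup_nonpos fun i => max_le (hxS i) le_rfl) hσ0
    rw [infDist_zero_of_mem hxS, this, mul_zero]
  obtain ⟨p, hp, hpx⟩ :=
    exists_mem_frontier_dist_eq_infDist (isClosed_sublevel_of_convexOn hg) hne hxS
  obtain ⟨a, ha, hpa⟩ := hbd p hp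
  set r := ⨅ i, -g i a
  have hr : ∀ i, g i a ≤ -r := fun i => le_neg.1 (ciInf_le (finite_range _).bddBelow i)
  have hr0 : 0 < r := by
    refine (Real.iInf_nonneg fun i => neg_nonneg.2 (interior_subset ha i)).lt_of_ne fun h0 => ?_
    rw [show r = 0 from h0.symm, mul_zero, dist_le_zero] at hpa
    exact hp.2 (hpa ▸ ha)
  have hxa : dist x a ≤ infDist x S + κ * r := by linarith [dist_triangle x p a]
  have hd := (infDist_sublevel_le_of_convexOn hg hr0 hσ0 hr hσ).trans
    (mul_le_mul_of_nonneg_left hxa (by positivity))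
  rw [div_mul_eq_mul_div, le_div_iff₀ (by positivity)] at hd
  nlinarith

end NormedSpace

theorem stmt12_general (n m : ℕ)
    (ftil : Fin m → EuclideanSpace ℝ (Fin n) → ℝ)
    (hconv : ∀ i, ConvexOn ℝ Set.univ (ftil i))
    (ρ : Fin m → ℝ) (hρ : ∀ i, 0 ≤ ρ i)
    (f : Fin m → EuclideanSpace ℝ (Fin n) → ℝ)
    (hf : ∀ i x, f i x = ftil i x - ρ i / 2 * ‖x‖ ^ 2)
    (Atil A : Set (EuclideanSpace ℝ (Fin n)))
    (hAtil : Atil = {x | ∀ i, ftil i x ≤ 0}) (hA : A = {x | ∀ i, f i x ≤ 0})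
    (hne : {x : EuclideanSpace ℝ (Fin n) | ∀ i, ftil i x < 0}.Nonempty)
    (κ : ℝ) (hκ : 0 < κ)
    (hbd : ∀ xbar ∈ frontier Atil, ∃ abar ∈ interior Atil,
      ‖xbar - abar‖ ≤ κ * ⨅ i, -ftil i abar) :
    ∃ τ > (0 : ℝ), ∀ x,
      Metric.infDist x A ≤ Metric.infDist x Atil ∧
      Metric.infDist x Atil ≤ τ * ⨆ i, max (ftil i x) 0 := by
  subst hAtil hA
  have hsub : {x | ∀ i, ftil i x ≤ 0} ⊆ {x | ∀ i, f i x ≤ 0} := fun x hx i => by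
    rw [hf]
    nlinarith [hx i, hρ i, sq_nonneg ‖x‖]
  have hne' : {x | ∀ i, ftil i x ≤ 0}.Nonempty := hne.mono fun x hx i => (hx i).le
  refine ⟨κ, hκ, fun x => ⟨infDist_le_infDist_of_subset hsub hne', ?_⟩⟩
  exact infDist_sublevel_le_mul_iSup hconv hne'
    (fun p hp => by simpa only [dist_eq_norm] using hbd p hp) x

theorem stmt12 (n m : ℕ) (hm : 1 ≤ m)
    (ftil : Fin m → EuclideanSpace ℝ (Fin n) → ℝ)
    (hconv : ∀ i, ConvexOn ℝ Set.univ (ftil i))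
    (ρ : Fin m → ℝ) (hρ : ∀ i, 0 ≤ ρ i)
    (f : Fin m → EuclideanSpace ℝ (Fin n) → ℝ)
    (hf : ∀ i x, f i x = ftil i x - ρ i / 2 * ‖x‖ ^ 2)
    (Atil A : Set (EuclideanSpace ℝ (Fin n)))
    (hAtil : Atil = {x | ∀ i, ftil i x ≤ 0}) (hA : A = {x | ∀ i, f i x ≤ 0})
    (hint : interior Atil = {x | ∀ i, ftil i x < 0})
    (hne : {x : EuclideanSpace ℝ (Fin n) | ∀ i, ftil i x < 0}.Nonempty)
    (κ : ℝ) (hκ : 0 < κ)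
    (hbd : ∀ xbar ∈ frontier Atil, ∃ abar ∈ interior Atil,
      ‖xbar - abar‖ ≤ κ * ⨅ i, -ftil i abar) :
    ∃ τ > (0 : ℝ), ∀ x,
      Metric.infDist x A ≤ Metric.infDist x Atil ∧
      Metric.infDist x Atil ≤ τ * ⨆ i, max (ftil i x) 0 :=
  stmt12_general n m ftil hconv ρ hρ f hf Atil A hAtil hA hne κ hκ hbd
end

section
/- Let m ≥ 1 and, for i ∈ {1,…,m}, let a_i > 0, b_i ∈ ℝⁿ, c_i ∈ ℝ. Let O = {x ∈ ℝⁿ : −a_i‖x‖² + ⟨b_i, x⟩ + c_i ≤ 0 for all i}, assume O ≠ ∅, and let α = inf_{x∈O} ‖x‖² (which is attained). Then a point x ∈ ℝⁿ attains the minimum of ‖·‖² over O if and only if x lies in the intersection of the sphere {y : ‖y‖² = α} with the polyhedron {y : ⟨b_i, y⟩ ≤ a_i α − c_i for all i ∈ {1,…,m}}. -/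
/-! The minimizers of `‖·‖²` over `O` are the points of `O` on the sphere `‖x‖² = α`, and on
that sphere every constraint `-aᵢ‖x‖² + ⟪bᵢ, x⟫ + cᵢ ≤ 0` becomes the linear inequality
`⟪bᵢ, x⟫ ≤ aᵢ α - cᵢ`. -/

open scoped RealInnerProductSpace

theorem IsLeast.minimizer_iff_mem_and_eq {ι β : Type*} [PartialOrder β] {f : ι → β} {S : Set ι}
    {α : β} (h : IsLeast (f '' S) α) {x : ι} :
    (x ∈ S ∧ ∀ y ∈ S, f x ≤ f y) ↔ (x ∈ S ∧ f x = α) := by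
  obtain ⟨⟨z, hzS, rfl⟩, hlb⟩ := h
  refine and_congr_right fun hxS => ⟨fun hmin => ?_, fun hx y hyS => ?_⟩
  · exact le_antisymm (hmin z hzS) (hlb ⟨x, hxS, rfl⟩)
  · exact hx ▸ hlb ⟨y, hyS, rfl⟩

theorem stmt15_general (n m : ℕ)
    (a : Fin m → ℝ)
    (b : Fin m → EuclideanSpace ℝ (Fin n)) (c : Fin m → ℝ)
    (O : Set (EuclideanSpace ℝ (Fin n)))
    (hO : O = {x | ∀ i, -(a i) * ‖x‖ ^ 2 + ⟪b i, x⟫ + c i ≤ 0})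
    (α : ℝ) (hα : IsLeast ((fun x : EuclideanSpace ℝ (Fin n) => ‖x‖ ^ 2) '' O) α) :
    ∀ x : EuclideanSpace ℝ (Fin n),
      (x ∈ O ∧ ∀ y ∈ O, ‖x‖ ^ 2 ≤ ‖y‖ ^ 2) ↔
      (‖x‖ ^ 2 = α ∧ ∀ i, ⟪b i, x⟫ ≤ a i * α - c i) := by
  intro x
  refine hα.minimizer_iff_mem_and_eq.trans ?_
  rw [and_comm]
  refine and_congr_right fun hxα => ?_
  subst hO
  simp only [Set.mem_ofPred_eq, hxα]
  exact forall_congr' fun i => by constructor <;> intro h <;> linarith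

theorem stmt15 (n m : ℕ) (hm : 1 ≤ m)
    (a : Fin m → ℝ) (ha : ∀ i, 0 < a i)
    (b : Fin m → EuclideanSpace ℝ (Fin n)) (c : Fin m → ℝ)
    (O : Set (EuclideanSpace ℝ (Fin n)))
    (hO : O = {x | ∀ i, -(a i) * ‖x‖ ^ 2 + ⟪b i, x⟫ + c i ≤ 0})
    (hOne : O.Nonempty)
    (α : ℝ) (hα : IsLeast ((fun x : EuclideanSpace ℝ (Fin n) => ‖x‖ ^ 2) '' O) α) :
    ∀ x : EuclideanSpace ℝ (Fin n),
      (x ∈ O ∧ ∀ y ∈ O, ‖x‖ ^ 2 ≤ ‖y‖ ^ 2) ↔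
      (‖x‖ ^ 2 = α ∧ ∀ i, ⟪b i, x⟫ ≤ a i * α - c i) :=
  stmt15_general n m a b c O hO α hα
end

section
/- Let ψ : ℝ → ℝ be defined by ψ(ξ) = 1/(1 + e^ξ). Then for every ξ ∈ ℝ, the second derivative ψ''(ξ) = e^ξ(e^ξ − 1)/(1 + e^ξ)³ satisfies ψ''(ξ) ≥ −1/(6√3), with equality when e^ξ = 2 − √3. Consequently, the function ξ ↦ 1/(1 + e^ξ) + ξ²/(12√3) is convex on ℝ; that is, ψ is ρ_ψ-weakly convex with ρ_ψ = 1/(6√3). -/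
/-!
Put `t = e^ξ`. Then `ψ'' = t (t - 1) / (1 + t)³`, and with `s = √3` one has the identity
`(1 + t)³ + 6 s t (t - 1) = (t - (2 - s))² (t + 7 + 4 s)`, whose right side is nonnegative for
`t > -1`, with a double root at `t = 2 - s`. Hence `ψ'' ≥ -1/(6√3)`, with equality there, and adding `ξ²/(12√3)`
makes the second derivative nonnegative.
-/

open Real Set

lemma convexOn_univ_add_sq_of_hasDerivAt2_ge {f f' f'' : ℝ → ℝ} {ρ : ℝ}
    (hf : ∀ x, HasDerivAt f (f' x) x) (hf' : ∀ x, HasDerivAt f' (f'' x) x)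
    (hρ : ∀ x, -ρ ≤ f'' x) :
    ConvexOn ℝ univ (fun x => f x + ρ / 2 * x ^ 2) := by
  have hsq (x : ℝ) : HasDerivAt (fun x => ρ / 2 * x ^ 2) (ρ * x) x :=
    ((hasDerivAt_pow 2 x).const_mul (ρ / 2)).congr_deriv (by ring)
  have hlin (x : ℝ) : HasDerivAt (fun x => f' x + ρ * x) (f'' x + ρ) x :=
    ((hf' x).add ((hasDerivAt_id x).const_mul ρ)).congr_deriv (by ring)
  refine convexOn_of_hasDerivWithinAt2_nonneg convex_univ
    (fun x _ => ((hf x).add (hsq x)).continuousAt.continuousWithinAt)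
    (fun x _ => ((hf x).add (hsq x)).hasDerivWithinAt)
    (fun x _ => (hlin x).hasDerivWithinAt) (fun x _ => ?_)
  linarith [hρ x]

lemma hasDerivAt_one_div_one_add_exp (ξ : ℝ) :
    HasDerivAt (fun x => 1 / (1 + exp x)) (-exp ξ / (1 + exp ξ) ^ 2) ξ := by
  have h := ((hasDerivAt_exp ξ).const_add 1).inv (by positivity)
  simpa [one_div, neg_div, Pi.inv_def] using h

lemma hasDerivAt_neg_exp_div_one_add_exp_sq (ξ : ℝ) :
    HasDerivAt (fun x => -exp x / (1 + exp x) ^ 2)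
      (exp ξ * (exp ξ - 1) / (1 + exp ξ) ^ 3) ξ := by
  have hsq : HasDerivAt (fun x => (1 + exp x) ^ 2) (2 * (1 + exp ξ) * exp ξ) ξ := by
    simpa [mul_comm, Pi.pow_def] using ((hasDerivAt_exp ξ).const_add 1).pow 2
  refine ((hasDerivAt_exp ξ).neg.div hsq (by positivity)).congr_deriv ?_
  rw [Pi.neg_apply]
  field_simp
  ring

lemma neg_one_div_six_mul_sqrt_three_le {t : ℝ} (ht : -1 < t) :
    -(1 / (6 * √3)) ≤ t * (t - 1) / (1 + t) ^ 3 := by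
  have hs : √3 ^ 2 = 3 := sq_sqrt (by norm_num)
  have hs₀ : 0 < √3 := by positivity
  have ht₁ : 0 < 1 + t := by linarith
  rw [neg_div', div_le_div_iff₀ (by positivity) (by positivity)]
  nlinarith [mul_nonneg (sq_nonneg (t - (2 - √3))) (by linarith : (0 : ℝ) ≤ t + 7 + 4 * √3)]

lemma div_eq_neg_one_div_six_mul_sqrt_three :
    (2 - √3) * ((2 - √3) - 1) / (1 + (2 - √3)) ^ 3 = -(1 / (6 * √3)) := by
  have hs : √3 ^ 2 = 3 := sq_sqrt (by norm_num)
  have hs₀ : 0 < √3 := by positivity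
  have hne : 1 + (2 - √3) ≠ 0 := by nlinarith
  field_simp
  nlinarith

theorem stmt17 (ψ : ℝ → ℝ) (hψ : ∀ ξ, ψ ξ = 1 / (1 + Real.exp ξ)) :
    (∀ ξ, deriv (deriv ψ) ξ = Real.exp ξ * (Real.exp ξ - 1) / (1 + Real.exp ξ) ^ 3) ∧
    (∀ ξ, -(1 / (6 * Real.sqrt 3)) ≤
      Real.exp ξ * (Real.exp ξ - 1) / (1 + Real.exp ξ) ^ 3) ∧
    (∀ ξ, Real.exp ξ = 2 - Real.sqrt 3 →
      Real.exp ξ * (Real.exp ξ - 1) / (1 + Real.exp ξ) ^ 3 = -(1 / (6 * Real.sqrt 3))) ∧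
    ConvexOn ℝ Set.univ (fun ξ => 1 / (1 + Real.exp ξ) + ξ ^ 2 / (12 * Real.sqrt 3)) := by
  obtain rfl : ψ = fun x => 1 / (1 + exp x) := funext hψ
  have hderiv : deriv (fun x => 1 / (1 + exp x)) = fun ξ => -exp ξ / (1 + exp ξ) ^ 2 :=
    funext fun ξ => (hasDerivAt_one_div_one_add_exp ξ).deriv
  have hbound (ξ : ℝ) := neg_one_div_six_mul_sqrt_three_le (t := exp ξ) (by linarith [exp_pos ξ])
  refine ⟨fun ξ => ?_, hbound, fun ξ h => h ▸ div_eq_neg_one_div_six_mul_sqrt_three, ?_⟩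
  · rw [hderiv]
    exact (hasDerivAt_neg_exp_div_one_add_exp_sq ξ).deriv
  · convert convexOn_univ_add_sq_of_hasDerivAt2_ge hasDerivAt_one_div_one_add_exp
      hasDerivAt_neg_exp_div_one_add_exp_sq hbound using 3
    field_simp
    ring
end
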